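/- arXiv:2505.22174 — 2 statements merged into one kernel-verified Lean document; each statement's English description precedes it below -/
import Mathlib

section
/- For every integer n ≥ 1 and every α : Fin n → ℝ with α i > 1 for all i, there exists a deterministic online allocation algorithm with foresight n−1 such that for every personalized interval-restricted stream v (i.e., 1 ≤ v t i ≤ α i for all t, i): at the end of every time step T, for all agents i, j there exists X ⊆ A_j^T with |X| ≤ 2 and v_i(A_i^T) ≥ (1/√(α i)) · Σ_{t ∈ A_j^T ∖ X} v t i; at the end of every time step T = kn with k ∈ ℕ, for all agents i, j there exists X ⊆ A_j^T with |X| ≤ 1 and v_i(A_i^T) ≥ (1/√(α i)) · Σ_{t ∈ A_j^T ∖ X} v t i. -/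
/-!
Goods are handled in blocks of `n`: with foresight `n - 1` the whole block is visible when its
first good arrives, and the block is distributed by a perfect matching of agents to slots. A good
is big for agent `i` if `i` values it at least `√(α i)`. For each ordered pair `(i, j)` a counter
records the blocks in which `i` gets no big good while `j` gets one that is big for `i`, minus the
blocks in which `i` gets a big good while `j`'s good is not big for `i`. Since values lie in
`[1, α i]`, in every block `v_i(j's good) / √(α i) ≤ v_i(i's good) + (√(α i) - 1) · Δcounter`,
so EF1 at the ends of blocks follows once every counter stays at most `1`: drop `j`'s good from
one block where the counter of `(i, j)` went up.

The matching maximises the total weight of the agents that receive a big good, with weights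
strictly decreasing along the saturated pairs (counter `1`). Keeping those pairs acyclic makes
this possible, and the optimal matching preserves both invariants: a saturated pair cannot be
incremented, as swapping the two goods would gain weight, and a new cycle of saturated pairs would
contain a newly saturated pair, so rotating the goods along it would gain weight. EF2 at an
arbitrary time follows from EF1 at the end of the last complete block, dropping in addition `j`'s
good in the current block.
-/

open Finset

noncomputable section

/-- The agent to whom good `t` is assigned by the deterministic online algorithm `F` with
foresight `ℓ` on stream `v`: `σ(t) = F [v 0, …, v (t+ℓ)]`. -/
def allocF (n ℓ : ℕ) (F : List (Fin n → NNReal) → Fin n) (v : ℕ → Fin n → NNReal)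
    (t : ℕ) : Fin n :=
  F ((List.range (t + ℓ + 1)).map v)

/-- The bundle of agent `i` at the end of time step `T`. -/
def bundleF (n ℓ : ℕ) (F : List (Fin n → NNReal) → Fin n) (v : ℕ → Fin n → NNReal)
    (i : Fin n) (T : ℕ) : Finset ℕ :=
  (Finset.range T).filter fun t => allocF n ℓ F v t = i

/-- The (real) value of the bundle `B` for agent `i`. -/
def bval (n : ℕ) (v : ℕ → Fin n → NNReal) (i : Fin n) (B : Finset ℕ) : ℝ :=
  ∑ t ∈ B, (v t i : ℝ)

namespace Function

theorem nonempty_periodicPts {α : Type*} [Finite α] [Nonempty α] (f : α → α) :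
    (periodicPts f).Nonempty := by
  obtain ⟨x⟩ := ‹Nonempty α›
  obtain ⟨m, k, hmk, heq⟩ := Finite.exists_ne_map_eq_of_infinite (f^[·] x)
  wlog hlt : m < k generalizing m k
  · exact this k m hmk.symm heq.symm (by omega)
  refine ⟨f^[m] x, mk_mem_periodicPts (n := k - m) (by omega) ?_⟩
  rw [IsPeriodicPt, IsFixedPt, ← iterate_add_apply, Nat.sub_add_cancel hlt.le]
  exact heq.symm

end Function

namespace Relation

open Classical in
def height {α : Type*} [Fintype α] (R : α → α → Prop) (x : α) : ℕ :=
  #{y | TransGen R x y}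

variable {α : Type*} {R : α → α → Prop}

theorem height_lt_height [Fintype α] (hR : ∀ x, ¬TransGen R x x) {x y : α} (h : R x y) :
    height R y < height R x := by
  classical
  refine card_lt_card ⟨fun z hz => ?_, fun hsub => ?_⟩
  · simp only [mem_filter, mem_univ, true_and] at hz ⊢
    exact TransGen.head h hz
  · have := hsub (by simpa using TransGen.single h)
    exact hR y (by simpa using this)

theorem exists_perm_of_transGen_self [Finite α] {x : α} (hx : TransGen R x x) :
    ∃ (σ : Equiv.Perm α) (s : Set α), s.Nonempty ∧ (∀ y ∉ s, σ y = y) ∧ ∀ y ∈ s, R y (σ y) := by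
  classical
  have hsucc : ∀ y, ∃ z, TransGen R z z ∧ (TransGen R y y → R y z) := by
    intro y
    by_cases hy : TransGen R y y
    · obtain ⟨z, hyz, hzy⟩ := TransGen.head'_iff.mp hy
      exact ⟨z, TransGen.tail' hzy hyz, fun _ => hyz⟩
    · exact ⟨x, hx, fun h => absurd h hy⟩
  choose f hf hfR using hsucc
  have hper : ∀ y ∈ Function.periodicPts f, TransGen R y y := by
    intro y hy
    obtain ⟨z, rfl⟩ := Function.periodicPts_subset_range hy
    exact hf z
  have : Nonempty α := ⟨x⟩
  refine ⟨Equiv.Perm.ofSubtype ((Function.bijOn_periodicPts f).equiv f), _,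
    Function.nonempty_periodicPts f, fun y hy => Equiv.Perm.ofSubtype_apply_of_not_mem _ hy,
    fun y hy => ?_⟩
  rw [Equiv.Perm.ofSubtype_apply_of_mem _ hy]
  exact hfR y (hper y hy)

theorem exists_transGen_self_of_perm [Fintype α] {σ : Equiv.Perm α} {s : Set α}
    (hs : s.Nonempty) (hfix : ∀ y ∉ s, σ y = y) (hR : ∀ y ∈ s, R y (σ y)) :
    ∃ x, TransGen R x x := by
  classical
  by_contra! hacyc
  obtain ⟨y, hy⟩ := hs
  have hlt : ∑ x, height R (σ x) < ∑ x, height R x := by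
    refine sum_lt_sum (fun x _ => ?_) ⟨y, mem_univ y, height_lt_height hacyc (hR y hy)⟩
    by_cases hx : x ∈ s
    · exact (height_lt_height hacyc (hR x hx)).le
    · rw [hfix x hx]
  rw [Equiv.sum_comp] at hlt
  exact lt_irrefl _ hlt

end Relation

theorem bundleF_mono {n ℓ : ℕ} {F : List (Fin n → NNReal) → Fin n} {v : ℕ → Fin n → NNReal}
    {i : Fin n} {T T' : ℕ} (h : T ≤ T') : bundleF n ℓ F v i T ⊆ bundleF n ℓ F v i T' :=
  filter_subset_filter _ (range_subset_range.mpr h)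

theorem bval_mono {n : ℕ} {v : ℕ → Fin n → NNReal} {i : Fin n} {B B' : Finset ℕ} (h : B ⊆ B') :
    bval n v i B ≤ bval n v i B' :=
  sum_le_sum_of_subset_of_nonneg h fun _ _ _ => NNReal.coe_nonneg _

theorem bval_image {n : ℕ} {v : ℕ → Fin n → NNReal} {i : Fin n} {s : Finset ℕ} {g : ℕ → ℕ}
    (hg : Set.InjOn g s) : bval n v i (s.image g) = ∑ b ∈ s, (v (g b) i : ℝ) :=
  sum_image hg

theorem exists_card_le_one_sum_sdiff_nonpos {κ : Type*} [DecidableEq κ] {s : Finset κ}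
    {f : κ → ℤ} (hf : ∀ b ∈ s, f b ≤ 1) (hs : ∑ b ∈ s, f b ≤ 1) :
    ∃ t ⊆ s, #t ≤ 1 ∧ ∑ b ∈ s \ t, f b ≤ 0 := by
  by_cases h : ∃ b ∈ s, f b = 1
  · obtain ⟨b, hb, hfb⟩ := h
    refine ⟨{b}, singleton_subset_iff.mpr hb, (card_singleton b).le, ?_⟩
    rw [sdiff_singleton_eq_erase, sum_erase_eq_sub hb]
    omega
  · push Not at h
    refine ⟨∅, empty_subset s, by simp, ?_⟩
    rw [sdiff_empty]
    exact sum_nonpos fun b hb => by have := hf b hb; have := h b hb; omega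

theorem div_le_add_mul_sub_ite {q a c : ℝ} (hq : 1 ≤ q) (ha : 1 ≤ a) (hc : c ≤ q * q) :
    c / q ≤ a + (q - 1) *
      ((if ¬q ≤ a ∧ q ≤ c then 1 else 0) - (if q ≤ a ∧ ¬q ≤ c then 1 else 0)) := by
  have hq0 : 0 < q := by linarith
  have hcq : c / q ≤ q := by rw [div_le_iff₀ hq0]; linarith
  have hsmall : ¬q ≤ c → c / q ≤ 1 := fun h => by rw [div_le_one hq0]; linarith
  by_cases hqa : q ≤ a <;> by_cases hqc : q ≤ c <;> simp only [hqa, hqc] <;> norm_num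
  · linarith
  · linarith [hsmall hqc]
  · linarith
  · linarith [hsmall hqc]

namespace EnvyMatching

open Relation

section Matching

variable {ι : Type*}

/- `big i r`: slot `r` of the current block holds a good that is big for agent `i`; the matching
`p` gives agent `i` slot `p i`. -/
open Classical in
def envyChange (big : ι → ι → Prop) (p : Equiv.Perm ι) (i j : ι) : ℤ :=
  (if ¬big i (p i) ∧ big i (p j) then 1 else 0) - (if big i (p i) ∧ ¬big i (p j) then 1 else 0)

def nextCounter (Φ : ι → ι → ℤ) (big : ι → ι → Prop) (p : Equiv.Perm ι) : ι → ι → ℤ :=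
  fun i j => Φ i j + envyChange big p i j

structure IsAdmissible (Φ : ι → ι → ℤ) : Prop where
  le_one : ∀ i j, Φ i j ≤ 1
  acyclic : ∀ i, ¬TransGen (fun a b => Φ a b = 1) i i

theorem envyChange_le_one {big : ι → ι → Prop} (p : Equiv.Perm ι) (i j : ι) :
    envyChange big p i j ≤ 1 := by
  unfold envyChange; split_ifs <;> omega

theorem nextCounter_eq_one {Φ : ι → ι → ℤ} {big : ι → ι → Prop} (hΦ : ∀ i j, Φ i j ≤ 1)
    {p : Equiv.Perm ι} {i j : ι}
    (h : nextCounter Φ big p i j = 1) :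
    (big i (p i) → big i (p j)) ∧ (Φ i j = 1 ∨ ¬big i (p i) ∧ big i (p j)) := by
  have := hΦ i j
  unfold nextCounter envyChange at h
  grind

variable [Fintype ι]

open Classical in
def score (Φ : ι → ι → ℤ) (big : ι → ι → Prop) (p : Equiv.Perm ι) : ℕ :=
  ∑ i, if big i (p i) then height (fun a b => Φ a b = 1) i + 1 else 0

open Classical in
def bestMatching (Φ : ι → ι → ℤ) (big : ι → ι → Prop) : Equiv.Perm ι :=
  (exists_max_image univ (score Φ big) univ_nonempty).choose

variable {Φ : ι → ι → ℤ} {big : ι → ι → Prop}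

open Classical in
theorem score_le_bestMatching (q : Equiv.Perm ι) :
    score Φ big q ≤ score Φ big (bestMatching Φ big) :=
  (exists_max_image univ (score Φ big) univ_nonempty).choose_spec.2 q (mem_univ q)

theorem score_lt_score_trans {p σ : Equiv.Perm ι} (hmono : ∀ y, big y (p y) → big y (p (σ y)))
    {y₀ : ι} (hy₀ : ¬big y₀ (p y₀)) (hy₀' : big y₀ (p (σ y₀))) :
    score Φ big p < score Φ big (σ.trans p) := by
  refine sum_lt_sum (fun y _ => ?_) ⟨y₀, mem_univ _, by simp [hy₀, hy₀']⟩
  by_cases hy : big y (p y)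
  · simp [hy, hmono y hy]
  · simp [hy]

theorem not_big_of_eq_one (hΦ : IsAdmissible Φ) {i j : ι} (h : Φ i j = 1)
    (hi : ¬big i (bestMatching Φ big i)) : ¬big i (bestMatching Φ big j) := by
  classical
  intro hj
  set p := bestMatching Φ big
  set w := fun x => height (fun a b => Φ a b = 1) x + 1
  have hij : i ≠ j := by rintro rfl; exact hi hj
  -- Swapping the slots of `i` and `j` gains `w i` at `i` and loses at most `w j` at `j`.
  have hswap : score Φ big p + w i ≤ score Φ big ((Equiv.swap i j).trans p) + w j := calc
    score Φ big p + w i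
        = ∑ x, ((if big x (p x) then w x else 0) + if x = i then w i else 0) := by
      simp [sum_add_distrib, score, w]
    _ ≤ ∑ x, ((if big x (p (Equiv.swap i j x)) then w x else 0) + if x = j then w j else 0) := by
      refine sum_le_sum fun x _ => ?_
      by_cases hxi : x = i
      · subst hxi; simp [hi, hj, hij]
      by_cases hxj : x = j
      · subst hxj
        simp only [Ne.symm hij, ↓reduceIte, add_zero, Equiv.swap_apply_right]
        split_ifs <;> omega
      · simp [hxi, hxj, Equiv.swap_apply_of_ne_of_ne hxi hxj]
    _ = score Φ big ((Equiv.swap i j).trans p) + w j := by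
      simp [sum_add_distrib, score, w]
      congr
  have hw : w j < w i := Nat.succ_lt_succ (height_lt_height hΦ.acyclic h)
  have hbest : score Φ big ((Equiv.swap i j).trans p) ≤ score Φ big p := score_le_bestMatching _
  omega

theorem IsAdmissible.next (hΦ : IsAdmissible Φ) :
    IsAdmissible (nextCounter Φ big (bestMatching Φ big)) where
  le_one i j := by
    have hle := hΦ.le_one i j
    unfold nextCounter envyChange
    split_ifs with hhit hcomp <;> try omega
    have : Φ i j ≠ 1 := fun h => not_big_of_eq_one hΦ h hhit.1 hhit.2
    omega
  acyclic x hx := by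
    set p := bestMatching Φ big
    obtain ⟨σ, s, hs, hfix, hstep⟩ := exists_perm_of_transGen_self hx
    have hedge := fun y (hy : y ∈ s) => nextCounter_eq_one hΦ.le_one (hstep y hy)
    by_cases hold : ∀ y ∈ s, Φ y (σ y) = 1
    · obtain ⟨z, hz⟩ := exists_transGen_self_of_perm (R := fun a b => Φ a b = 1) hs hfix hold
      exact hΦ.acyclic z hz
    push Not at hold
    obtain ⟨y₀, hy₀, hnew⟩ := hold
    obtain ⟨hlose, hgain⟩ := (hedge y₀ hy₀).2.resolve_left hnew
    have hmono : ∀ y, big y (p y) → big y (p (σ y)) := by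
      intro y
      by_cases hy : y ∈ s
      · exact (hedge y hy).1
      · rw [hfix y hy]; exact id
    exact (score_le_bestMatching (σ.trans p)).not_gt (score_lt_score_trans hmono hlose hgain)

end Matching

section Algorithm

variable {n : ℕ} (α : Fin n → ℝ) (v : ℕ → Fin n → NNReal)

def bigSlots (b : ℕ) (i r : Fin n) : Prop :=
  √(α i) ≤ v (b * n + r) i

def counters : ℕ → Fin n → Fin n → ℤ
  | 0 => 0
  | b + 1 => nextCounter (counters b) (bigSlots α v b) (bestMatching (counters b) (bigSlots α v b))

def blockMatching (b : ℕ) : Equiv.Perm (Fin n) :=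
  bestMatching (counters α v b) (bigSlots α v b)

def goodOf (b : ℕ) (j : Fin n) : ℕ :=
  b * n + blockMatching α v b j

def schedule [NeZero n] (t : ℕ) : Fin n :=
  (blockMatching α v (t / n)).symm (Fin.ofNat n t)

/- At time `t` the algorithm is given `v 0, …, v (t + n - 1)`: the length of the list recovers `t`,
and the list covers the whole block containing good `t`, so the padding value `1` is never read. -/
def algorithm [NeZero n] (L : List (Fin n → NNReal)) : Fin n :=
  schedule α (fun s => L.getD s 1) (L.length - n)

theorem counters_admissible (k : ℕ) : IsAdmissible (counters α v k) := by
  induction k with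
  | zero =>
    refine ⟨fun _ _ => zero_le_one, fun i h => ?_⟩
    obtain ⟨_, h0, -⟩ := TransGen.head'_iff.mp h
    simp [counters] at h0
  | succ k ih => exact ih.next

theorem counters_eq_sum (k : ℕ) (i j : Fin n) :
    counters α v k i j =
      ∑ b ∈ range k, envyChange (bigSlots α v b) (blockMatching α v b) i j := by
  induction k with
  | zero => rfl
  | succ k ih => rw [sum_range_succ, ← ih]; rfl

variable {α} {u v}

theorem goodOf_lt (b : ℕ) (j : Fin n) : goodOf α v b j < (b + 1) * n := by
  rw [goodOf, Nat.succ_mul]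
  exact Nat.add_lt_add_left (blockMatching α v b j).isLt _

theorem bigSlots_congr {b : ℕ} (h : ∀ s < (b + 1) * n, u s = v s) :
    bigSlots α u b = bigSlots α v b := by
  ext i r
  rw [bigSlots, bigSlots, h _ (by rw [Nat.succ_mul]; exact Nat.add_lt_add_left r.isLt _)]

theorem counters_congr {b : ℕ} (h : ∀ s < b * n, u s = v s) :
    counters α u b = counters α v b := by
  induction b with
  | zero => rfl
  | succ b ih =>
    rw [counters, counters, ih fun s hs => h s (hs.trans_le (by gcongr; omega)), bigSlots_congr h]

theorem blockMatching_congr {b : ℕ} (h : ∀ s < (b + 1) * n, u s = v s) :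
    blockMatching α u b = blockMatching α v b := by
  rw [blockMatching, blockMatching, bigSlots_congr h,
    counters_congr fun s hs => h s (hs.trans_le (by gcongr; omega))]

theorem div_sqrt_le_add {i : Fin n} (hα : 1 ≤ α i)
    (hv : ∀ t, 1 ≤ (v t i : ℝ) ∧ (v t i : ℝ) ≤ α i) (b : ℕ) (j : Fin n) :
    (v (goodOf α v b j) i : ℝ) / √(α i) ≤ v (goodOf α v b i) i +
      (√(α i) - 1) * envyChange (bigSlots α v b) (blockMatching α v b) i j := by
  have := div_le_add_mul_sub_ite (a := v (goodOf α v b i) i) (c := v (goodOf α v b j) i)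
    (Real.one_le_sqrt.mpr hα) (hv _).1 (by rw [Real.mul_self_sqrt (by linarith)]; exact (hv _).2)
  convert this using 3
  push_cast [envyChange]
  rfl

variable [NeZero n]

theorem goodOf_div (b : ℕ) (j : Fin n) : goodOf α v b j / n = b := by
  rw [goodOf, Nat.add_comm, Nat.add_mul_div_right _ _ (NeZero.pos n),
    Nat.div_eq_of_lt (blockMatching α v b j).isLt, zero_add]

theorem goodOf_injective (j : Fin n) : Function.Injective (goodOf α v · j) := fun b b' h => by
  rw [← goodOf_div (α := α) (v := v) b j, ← goodOf_div (α := α) (v := v) b' j]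
  exact congrArg (· / n) h

theorem schedule_eq_iff {t : ℕ} {j : Fin n} :
    schedule α v t = j ↔ goodOf α v (t / n) j = t := by
  rw [schedule, Equiv.symm_apply_eq, Fin.ext_iff, Fin.val_ofNat, goodOf]
  have := Nat.div_add_mod' t n
  omega

theorem schedule_congr {t : ℕ} (h : ∀ s < t + n, u s = v s) :
    schedule α u t = schedule α v t := by
  have := Nat.div_mul_le_self t n
  rw [schedule, schedule, blockMatching_congr fun s hs => h s (by rw [Nat.succ_mul] at hs; omega)]

theorem allocF_algorithm (t : ℕ) : allocF n (n - 1) (algorithm α) v t = schedule α v t := by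
  have hlen : t + (n - 1) + 1 - n = t := by have := NeZero.pos n; omega
  rw [allocF, algorithm, List.length_map, List.length_range, hlen]
  refine schedule_congr fun s hs => ?_
  rw [List.getD_eq_getElem _ _ (by simp; omega), List.getElem_map, List.getElem_range]

theorem bundleF_algorithm_mul (k : ℕ) (j : Fin n) :
    bundleF n (n - 1) (algorithm α) v j (k * n) = (range k).image (goodOf α v · j) := by
  ext t
  simp only [bundleF, mem_filter, mem_range, mem_image, allocF_algorithm, schedule_eq_iff]
  constructor
  · rintro ⟨ht, hj⟩
    exact ⟨t / n, Nat.div_lt_of_lt_mul (by rwa [mul_comm]), hj⟩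
  · rintro ⟨b, hb, rfl⟩
    exact ⟨(goodOf_lt b j).trans_le (Nat.mul_le_mul_right _ hb), by rw [goodOf_div]⟩

theorem bundleF_algorithm_sdiff_subset (T : ℕ) (j : Fin n) :
    bundleF n (n - 1) (algorithm α) v j T \ {goodOf α v (T / n) j} ⊆
      bundleF n (n - 1) (algorithm α) v j (T / n * n) := by
  intro t ht
  simp only [mem_sdiff, bundleF, mem_filter, mem_range, allocF_algorithm, schedule_eq_iff,
    mem_singleton] at ht ⊢
  obtain ⟨⟨htT, hj⟩, hne⟩ := ht
  refine ⟨not_le.mp fun hge => hne ?_, hj⟩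
  have hdiv : t / n = T / n :=
    le_antisymm (Nat.div_le_div_right htT.le) ((Nat.le_div_iff_mul_le (NeZero.pos n)).mpr hge)
  rw [← hdiv, hj]

theorem ef1_algorithm {i : Fin n} (hα : 1 ≤ α i) (hv : ∀ t, 1 ≤ (v t i : ℝ) ∧ (v t i : ℝ) ≤ α i)
    (k : ℕ) (j : Fin n) :
    ∃ X ⊆ bundleF n (n - 1) (algorithm α) v j (k * n), X.card ≤ 1 ∧
      (1 / √(α i)) * bval n v i (bundleF n (n - 1) (algorithm α) v j (k * n) \ X) ≤
        bval n v i (bundleF n (n - 1) (algorithm α) v i (k * n)) := by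
  set e := fun b => envyChange (bigSlots α v b) (blockMatching α v b) i j
  obtain ⟨B, hBk, hB, he⟩ := exists_card_le_one_sum_sdiff_nonpos (s := range k) (f := e)
    (fun b _ => envyChange_le_one _ i j)
    (by rw [← counters_eq_sum]; exact (counters_admissible α v k).le_one i j)
  refine ⟨B.image (goodOf α v · j), ?_, card_image_le.trans hB, ?_⟩
  · rw [bundleF_algorithm_mul]
    exact image_subset_image hBk
  have hq : 1 ≤ √(α i) := Real.one_le_sqrt.mpr hα
  rw [bundleF_algorithm_mul, bundleF_algorithm_mul, ← image_sdiff _ _ (goodOf_injective j),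
    bval_image (goodOf_injective j).injOn, bval_image (goodOf_injective i).injOn,
    one_div_mul_eq_div, sum_div]
  calc ∑ b ∈ range k \ B, (v (goodOf α v b j) i : ℝ) / √(α i)
      ≤ ∑ b ∈ range k \ B, ((v (goodOf α v b i) i : ℝ) + (√(α i) - 1) * e b) :=
        sum_le_sum fun b _ => div_sqrt_le_add hα hv b j
    _ = ∑ b ∈ range k \ B, (v (goodOf α v b i) i : ℝ) + (√(α i) - 1) * ∑ b ∈ range k \ B, e b := by
        rw [sum_add_distrib, ← mul_sum]
        push_cast
        rfl
    _ ≤ ∑ b ∈ range k \ B, (v (goodOf α v b i) i : ℝ) :=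
        add_le_of_nonpos_right (mul_nonpos_of_nonneg_of_nonpos (by linarith) (by exact_mod_cast he))
    _ ≤ ∑ b ∈ range k, (v (goodOf α v b i) i : ℝ) :=
        sum_le_sum_of_subset_of_nonneg sdiff_subset fun _ _ _ => NNReal.coe_nonneg _

theorem ef2_algorithm {i : Fin n} (hα : 1 ≤ α i) (hv : ∀ t, 1 ≤ (v t i : ℝ) ∧ (v t i : ℝ) ≤ α i)
    (T : ℕ) (j : Fin n) :
    ∃ X ⊆ bundleF n (n - 1) (algorithm α) v j T, X.card ≤ 2 ∧
      (1 / √(α i)) * bval n v i (bundleF n (n - 1) (algorithm α) v j T \ X) ≤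
        bval n v i (bundleF n (n - 1) (algorithm α) v i T) := by
  set k := T / n
  have hkT : k * n ≤ T := Nat.div_mul_le_self T n
  obtain ⟨X, -, hX1, hXle⟩ := ef1_algorithm hα hv k j
  refine ⟨insert (goodOf α v k j) X ∩ bundleF n (n - 1) (algorithm α) v j T, inter_subset_right,
    (card_le_card inter_subset_left).trans ((card_insert_le _ _).trans (by omega)), ?_⟩
  have hsub : bundleF n (n - 1) (algorithm α) v j T \
      (insert (goodOf α v k j) X ∩ bundleF n (n - 1) (algorithm α) v j T) ⊆
        bundleF n (n - 1) (algorithm α) v j (k * n) \ X := by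
    intro t ht
    simp only [mem_sdiff, mem_inter, mem_insert, not_and] at ht
    obtain ⟨htT, hout⟩ := ht
    refine mem_sdiff.mpr ⟨bundleF_algorithm_sdiff_subset T j ?_, fun htX => hout (Or.inr htX) htT⟩
    exact mem_sdiff.mpr ⟨htT, fun hg => hout (Or.inl (mem_singleton.mp hg)) htT⟩
  calc (1 / √(α i)) * bval n v i (bundleF n (n - 1) (algorithm α) v j T \
        (insert (goodOf α v k j) X ∩ bundleF n (n - 1) (algorithm α) v j T))
      ≤ (1 / √(α i)) * bval n v i (bundleF n (n - 1) (algorithm α) v j (k * n) \ X) :=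
        mul_le_mul_of_nonneg_left (bval_mono hsub) (by positivity)
    _ ≤ bval n v i (bundleF n (n - 1) (algorithm α) v i (k * n)) := hXle
    _ ≤ bval n v i (bundleF n (n - 1) (algorithm α) v i T) := bval_mono (bundleF_mono hkT)

end Algorithm

end EnvyMatching

/-- There is a deterministic online allocation algorithm with foresight `n−1` such that, on
every personalized interval-restricted stream, the allocation is `(1/√(α i))`-EF2 at the end
of every time step and `(1/√(α i))`-EF1 at the end of every time step `T = kn`. -/
theorem statement18 (n : ℕ) (hn : 1 ≤ n) (α : Fin n → ℝ) (hα : ∀ i, 1 < α i) :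
    ∃ F : List (Fin n → NNReal) → Fin n,
      ∀ v : ℕ → Fin n → NNReal,
        (∀ (t : ℕ) (i : Fin n), 1 ≤ (v t i : ℝ) ∧ (v t i : ℝ) ≤ α i) →
        (∀ (T : ℕ) (i j : Fin n), ∃ X ⊆ bundleF n (n - 1) F v j T, X.card ≤ 2 ∧
            (1 / Real.sqrt (α i)) * bval n v i (bundleF n (n - 1) F v j T \ X) ≤
              bval n v i (bundleF n (n - 1) F v i T)) ∧
        (∀ (k : ℕ) (i j : Fin n), ∃ X ⊆ bundleF n (n - 1) F v j (k * n), X.card ≤ 1 ∧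
            (1 / Real.sqrt (α i)) * bval n v i (bundleF n (n - 1) F v j (k * n) \ X) ≤
              bval n v i (bundleF n (n - 1) F v i (k * n))) := by
  have : NeZero n := ⟨by omega⟩
  exact ⟨EnvyMatching.algorithm α, fun v hv =>
    ⟨fun T i j => EnvyMatching.ef2_algorithm (hα i).le (hv · i) T j,
      fun k i j => EnvyMatching.ef1_algorithm (hα i).le (hv · i) k j⟩⟩

end
end

section
/- Let n ≥ 1 be an integer and let w be an additive valuation on a finite set S of t goods such that every good has w-value either 1 or α, where α ≥ 1 is a real number, and exactly h goods have w-value α, with h ≤ n−1. Then the n-agent maximin share satisfies μ_w^n(S) ≤ ⌊(t−h)/(n−h)⌋. -/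
open Finset
open scoped Classical

noncomputable section

/-- The `n`-agent maximin share of the additive valuation `w` over the finite set `S` of goods:
the maximum, over partitions of `S` into `n` (possibly empty) bundles, of the minimum value
of a bundle. -/
def mmsG {G : Type*} (n : ℕ) (S : Finset G) (w : G → ℝ) : ℝ :=
  sSup { x : ℝ | ∃ P : G → Fin n,
    x = ⨅ j : Fin n, ∑ g ∈ S.filter (fun g => P g = j), w g }

/-!
The `h` goods of value `α` meet at most `h` bundles of a partition, so at least `n - h` bundles
consist of goods of value `1` only. These bundles share at most `|S| - h` goods, so by pigeonhole
one of them has at most `⌊(|S| - h)/(n - h)⌋` goods, which bounds its value and hence the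
minimum over all bundles.
-/

section

variable {G ι : Type*}

/-- The bound `0 ≤ c` covers the case where `S` has no partition into `n` bundles, in which
`mmsG` is the junk value `sSup ∅ = 0`. -/
theorem mmsG_le_of_forall_exists_sum_le {n : ℕ} {S : Finset G} {w : G → ℝ} {c : ℝ}
    (hc : 0 ≤ c) (hP : ∀ P : G → Fin n, ∃ j, ∑ g ∈ S with P g = j, w g ≤ c) :
    mmsG n S w ≤ c := by
  refine Real.sSup_le ?_ hc
  rintro x ⟨P, rfl⟩
  obtain ⟨j, hj⟩ := hP P
  exact (ciInf_le (Set.finite_range _).bddBelow j).trans hj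

theorem exists_notMem_image_card_fiber_le [Fintype ι] [DecidableEq ι] (P : G → ι)
    (A B : Finset G) (hA : #A < Fintype.card ι) :
    ∃ j ∉ A.image P, #{g ∈ B | P g = j} ≤ #B / (Fintype.card ι - #A) := by
  have hfree : Fintype.card ι - #A ≤ #(A.image P)ᶜ := by
    rw [card_compl]
    exact Nat.sub_le_sub_left card_image_le _
  have hB : #B < #(A.image P)ᶜ * (#B / (Fintype.card ι - #A) + 1) :=
    calc #B < (Fintype.card ι - #A) * (#B / (Fintype.card ι - #A) + 1) :=
          Nat.lt_mul_div_succ _ (by omega)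
      _ ≤ _ := Nat.mul_le_mul_right _ hfree
  obtain ⟨j, hj, hfiber⟩ := exists_card_fiber_lt_of_card_lt_mul hB
  exact ⟨j, mem_compl.mp hj, Nat.lt_succ_iff.mp hfiber⟩

theorem sum_fiber_eq_card_of_notMem_image [DecidableEq ι] {P : G → ι} {S A : Finset G}
    {w : G → ℝ} {j : ι} (hw : ∀ g ∈ S \ A, w g = 1) (hj : j ∉ A.image P) :
    ∑ g ∈ S with P g = j, w g = #{g ∈ S \ A | P g = j} := by
  have hfiber : {g ∈ S | P g = j} = {g ∈ S \ A | P g = j} := by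
    ext g
    simp only [mem_filter, mem_sdiff]
    exact ⟨fun ⟨hg, hPg⟩ => ⟨⟨hg, fun hgA => hj (hPg ▸ mem_image_of_mem P hgA)⟩, hPg⟩,
      fun ⟨⟨hg, _⟩, hPg⟩ => ⟨hg, hPg⟩⟩
  rw [hfiber, sum_congr rfl fun g hg => hw g (mem_filter.mp hg).1]
  simp

end

theorem statement19_general {G : Type*} (n : ℕ) (hn : 1 ≤ n) (S : Finset G) (w : G → ℝ)
    (α : ℝ) (hw : ∀ g ∈ S, w g = 1 ∨ w g = α)
    (h : ℕ) (hcard : (S.filter fun g => w g = α).card = h) (hh : h ≤ n - 1) :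
    mmsG n S w ≤ (((S.card - h) / (n - h) : ℕ) : ℝ) := by
  set A := S.filter fun g => w g = α
  have hunit : ∀ g ∈ S \ A, w g = 1 := by
    intro g hg
    obtain ⟨hgS, hgA⟩ := mem_sdiff.mp hg
    exact (hw g hgS).resolve_right fun hα => hgA (mem_filter.mpr ⟨hgS, hα⟩)
  have hunitCard : #(S \ A) = #S - h := by rw [card_sdiff_of_subset (filter_subset _ _), hcard]
  refine mmsG_le_of_forall_exists_sum_le (Nat.cast_nonneg _) fun P => ?_
  obtain ⟨j, hj, hfiber⟩ :=
    exists_notMem_image_card_fiber_le P A (S \ A) (by rw [Fintype.card_fin]; omega)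
  rw [Fintype.card_fin, hcard, hunitCard] at hfiber
  exact ⟨j, (sum_fiber_eq_card_of_notMem_image hunit hj).trans_le (by exact_mod_cast hfiber)⟩

/-- If every good of `S` has value `1` or `α ≥ 1`, and exactly `h ≤ n−1` goods have value `α`,
then the `n`-agent maximin share of `S` is at most `⌊(|S|−h)/(n−h)⌋`. -/
theorem statement19 {G : Type*} (n : ℕ) (hn : 1 ≤ n) (S : Finset G) (w : G → ℝ)
    (α : ℝ) (hα : 1 ≤ α) (hw : ∀ g ∈ S, w g = 1 ∨ w g = α)
    (h : ℕ) (hcard : (S.filter fun g => w g = α).card = h) (hh : h ≤ n - 1) :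
    mmsG n S w ≤ (((S.card - h) / (n - h) : ℕ) : ℝ) :=
  statement19_general n hn S w α hw h hcard hh

end
end
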